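/- Let g₁, ..., g_l be jointly Gaussian real random variables, each centered with variance 1, such that Cov(g_i, g_j) ≥ 0 for all i, j. Then E[g₁ · g₂ · ⋯ · g_l] ≤ E[g₁^l]. -/

import Mathlib

/-!
For odd `l` both sides vanish: a centered jointly Gaussian vector `g` has the same law as `-g`
(by Cramér–Wold, each linear functional of either is a centered Gaussian of the same variance),
while `∏ gᵢ` changes sign under `g ↦ -g`. For even `l` no Gaussianity is needed beyond the
marginals: by AM-GM, `|∏ gᵢ| ≤ (1/l) ∑ |gᵢ|^l`, and every `|gᵢ|^l` has the expectation `E[g₁^l]`.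
-/

open MeasureTheory ProbabilityTheory
open scoped NNReal

theorem Real.abs_prod_le_sum_abs_pow_card_div_card {ι : Type*} [Fintype ι] [Nonempty ι]
    (x : ι → ℝ) : |∏ i, x i| ≤ (∑ i, |x i| ^ Fintype.card ι) / Fintype.card ι := by
  set n := Fintype.card ι
  have hn : n ≠ 0 := Fintype.card_ne_zero
  have h := Real.geom_mean_le_arith_mean_weighted Finset.univ (fun _ => (n : ℝ)⁻¹)
    (fun i => |x i| ^ n) (fun _ _ => by positivity) (by simp [n, hn]) (fun _ _ => by positivity)
  simp only [Real.pow_rpow_inv_natCast (abs_nonneg _) hn] at h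
  rwa [Finset.abs_prod, div_eq_inv_mul, Finset.mul_sum]

theorem MeasureTheory.Measure.ext_of_map_strongDual {E : Type*} [NormedAddCommGroup E]
    [NormedSpace ℝ E] [CompleteSpace E] [MeasurableSpace E] [BorelSpace E]
    [SecondCountableTopology E] {μ ν : Measure E} [IsFiniteMeasure μ] [IsFiniteMeasure ν]
    (h : ∀ L : StrongDual ℝ E, μ.map L = ν.map L) : μ = ν :=
  Measure.ext_of_charFunDual <| funext fun L => by
    rw [charFunDual_eq_charFun_map_one, charFunDual_eq_charFun_map_one, h]

theorem MeasureTheory.integral_eq_zero_of_odd {G : Type*} [MeasurableSpace G] [AddGroup G]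
    [MeasurableNeg G] (μ : Measure G) [μ.IsNegInvariant] {f : G → ℝ} (hf : f.Odd) :
    ∫ x, f x ∂μ = 0 := by
  have h := integral_neg_eq_self f μ
  simp only [hf _, integral_neg] at h
  linarith

namespace ProbabilityTheory

instance isNegInvariant_gaussianReal (v : ℝ≥0) : (gaussianReal 0 v).IsNegInvariant :=
  ⟨by simpa [Measure.neg_def] using gaussianReal_map_neg (μ := 0) (v := v)⟩

variable {ι Ω : Type*} [Fintype ι] [MeasurableSpace Ω] {μ : Measure Ω} {g : ι → Ω → ℝ}

theorem isNegInvariant_map_of_map_sum_eq_gaussianReal [IsProbabilityMeasure μ]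
    (hmeas : ∀ i, AEMeasurable (g i) μ)
    (hgauss : ∀ c : ι → ℝ, ∃ v : ℝ≥0, μ.map (fun ω => ∑ i, c i * g i ω) = gaussianReal 0 v) :
    (μ.map fun ω i => g i ω).IsNegInvariant := by
  classical
  have hG : AEMeasurable (fun ω i => g i ω) μ := aemeasurable_pi_lambda _ hmeas
  refine ⟨?_⟩
  rw [Measure.neg_def]
  refine Measure.ext_of_map_strongDual fun L => ?_
  let c : ι → ℝ := fun i => L fun j => if i = j then 1 else 0
  have hL : ∀ x : ι → ℝ, L x = ∑ i, c i * x i := fun x => by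
    simpa [c, mul_comm] using LinearMap.pi_apply_eq_sum_univ L.toLinearMap x
  obtain ⟨v, hv⟩ := hgauss c
  have hmap : (μ.map fun ω i => g i ω).map L = gaussianReal 0 v := by
    rw [L.measurable.aemeasurable.map_map_of_aemeasurable hG]
    simpa only [Function.comp_def, hL] using hv
  rw [Measure.map_map L.measurable measurable_neg, show L ∘ Neg.neg = Neg.neg ∘ L from
    funext (map_neg L), ← Measure.map_map measurable_neg L.measurable, hmap,
    gaussianReal_map_neg, neg_zero]

theorem integral_prod_eq_zero_of_odd_card [IsProbabilityMeasure μ]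
    (hmeas : ∀ i, AEMeasurable (g i) μ)
    (hgauss : ∀ c : ι → ℝ, ∃ v : ℝ≥0, μ.map (fun ω => ∑ i, c i * g i ω) = gaussianReal 0 v)
    (hodd : Odd (Fintype.card ι)) :
    ∫ ω, ∏ i, g i ω ∂μ = 0 := by
  have hG : AEMeasurable (fun ω i => g i ω) μ := aemeasurable_pi_lambda _ hmeas
  have := isNegInvariant_map_of_map_sum_eq_gaussianReal hmeas hgauss
  rw [← integral_map (f := fun x : ι → ℝ => ∏ i, x i) hG (by fun_prop)]
  exact integral_eq_zero_of_odd _ fun x => by simp [Finset.prod_neg, hodd.neg_one_pow]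

theorem integral_prod_le_integral_abs_pow_card [Nonempty ι] (hmeas : ∀ i, AEMeasurable (g i) μ)
    {ν : Measure ℝ} (hlaw : ∀ i, μ.map (g i) = ν)
    (hint : Integrable (fun x => |x| ^ Fintype.card ι) ν) :
    ∫ ω, ∏ i, g i ω ∂μ ≤ ∫ x, |x| ^ Fintype.card ι ∂ν := by
  set n := Fintype.card ι
  have hint_i : ∀ i, Integrable (fun ω => |g i ω| ^ n) μ := fun i => by
    rw [← hlaw i] at hint
    exact hint.comp_aemeasurable (hmeas i)
  have hmoment : ∀ i, ∫ ω, |g i ω| ^ n ∂μ = ∫ x, |x| ^ n ∂ν := fun i => by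
    rw [← hlaw i, integral_map (hmeas i) (by fun_prop)]
  have hsum : Integrable (fun ω => (∑ i, |g i ω| ^ n) / n) μ :=
    (integrable_finsetSum _ fun i _ => hint_i i).div_const _
  have hbound : ∀ ω, |∏ i, g i ω| ≤ (∑ i, |g i ω| ^ n) / n := fun ω =>
    Real.abs_prod_le_sum_abs_pow_card_div_card _
  have hprod : Integrable (fun ω => ∏ i, g i ω) μ :=
    hsum.mono' (Finset.aemeasurable_fun_prod _ fun i _ => hmeas i).aestronglyMeasurable
      (ae_of_all _ hbound)
  calc ∫ ω, ∏ i, g i ω ∂μ ≤ ∫ ω, (∑ i, |g i ω| ^ n) / n ∂μ :=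
        integral_mono hprod hsum fun ω => (le_abs_self _).trans (hbound ω)
    _ = ∫ x, |x| ^ n ∂ν := by
        rw [integral_div, integral_finsetSum _ fun i _ => hint_i i]
        simp [hmoment, n]

end ProbabilityTheory

theorem expectation_prod_le_moment_of_jointly_gaussian_general
    {Ω : Type*} [MeasurableSpace Ω] (μ : Measure Ω) [IsProbabilityMeasure μ]
    (l : ℕ) (hl : 0 < l) (g : Fin l → Ω → ℝ)
    (hmeas : ∀ i, Measurable (g i))
    (hgauss : ∀ c : Fin l → ℝ, ∃ v : NNReal,
      Measure.map (fun ω => ∑ i, c i * g i ω) μ = gaussianReal 0 v)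
    (hstd : ∀ i, Measure.map (g i) μ = gaussianReal 0 1) :
    ∫ ω, ∏ i, g i ω ∂μ ≤ ∫ ω, (g ⟨0, hl⟩ ω) ^ l ∂μ := by
  have hmoment : ∫ ω, g ⟨0, hl⟩ ω ^ l ∂μ = ∫ x, x ^ l ∂gaussianReal 0 1 := by
    rw [← hstd ⟨0, hl⟩, integral_map (hmeas _).aemeasurable (by fun_prop)]
  rcases Nat.even_or_odd l with hl_even | hl_odd
  · have : Nonempty (Fin l) := ⟨⟨0, hl⟩⟩
    have hint : Integrable (fun x : ℝ => |x| ^ l) (gaussianReal 0 1) := by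
      simpa using (memLp_id_gaussianReal (l : ℝ≥0)).integrable_norm_pow hl.ne'
    calc ∫ ω, ∏ i, g i ω ∂μ ≤ ∫ x, |x| ^ l ∂gaussianReal 0 1 := by
          simpa using integral_prod_le_integral_abs_pow_card (fun i => (hmeas i).aemeasurable)
            hstd (by simpa using hint)
      _ = ∫ ω, g ⟨0, hl⟩ ω ^ l ∂μ := by simp_rw [hl_even.pow_abs, hmoment]
  · rw [hmoment, integral_prod_eq_zero_of_odd_card (fun i => (hmeas i).aemeasurable) hgauss
      (by simpa using hl_odd)]
    exact (integral_eq_zero_of_odd (f := fun x => x ^ l) _ hl_odd.neg_pow).ge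

/-- Let `g₁, …, g_l` be jointly Gaussian real random variables (every linear
combination is Gaussian), each centered with variance 1, with pairwise
nonnegative covariances. Then `E[g₁ ⋯ g_l] ≤ E[g₁^l]`. -/
theorem expectation_prod_le_moment_of_jointly_gaussian
    {Ω : Type*} [MeasurableSpace Ω] (μ : Measure Ω) [IsProbabilityMeasure μ]
    (l : ℕ) (hl : 0 < l) (g : Fin l → Ω → ℝ)
    (hmeas : ∀ i, Measurable (g i))
    (hgauss : ∀ c : Fin l → ℝ, ∃ v : NNReal,
      Measure.map (fun ω => ∑ i, c i * g i ω) μ = gaussianReal 0 v)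
    (hstd : ∀ i, Measure.map (g i) μ = gaussianReal 0 1)
    (hcov : ∀ i j, 0 ≤ ∫ ω, g i ω * g j ω ∂μ) :
    ∫ ω, ∏ i, g i ω ∂μ ≤ ∫ ω, (g ⟨0, hl⟩ ω) ^ l ∂μ :=
  expectation_prod_le_moment_of_jointly_gaussian_general μ l hl g hmeas hgauss hstd
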